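/- Let A ∈ ℝ^{N×N} be symmetric with entries in {0,1}, regular of degree k > 0 (Σ_{i} A_{ij} = k for all j), and let α ∈ ℝ. Define F : ℝ^N → ℝ^N by F(p)_i = Σ_{j=1}^N [A_{ij} exp(αN p_i) / (Σ_{l=1}^N A_{lj} exp(αN p_l))] p_j. Then F is differentiable at the uniform state p_unif = (1/N, …, 1/N), and its Jacobian (Fréchet derivative) at p_unif is the linear map given by the matrix DF(p_unif) = A/k − α A²/k² + α I, where I is the N×N identity matrix. -/

import Mathlib

/-!
Write `E(p) = (exp (c pᵢ))ᵢ` with `c = αN`. In vector form the walk is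
`F(p) = E(p) * A (p / Aᵀ E(p))`, with pointwise product and quotient, so its derivative follows
from the product, quotient and chain rules. At a constant state `p = a·𝟙` everything is constant:
`E = e·𝟙` with `e = exp (c a)`, `Aᵀ E = k e·𝟙` by regularity, and `A (p / Aᵀ E) = (a / e)·𝟙`.
The exponential factor then contributes `c a · I = α I`, the denominator `-(c a / k²) A Aᵀ`,
and the numerator `A / k`; symmetry turns `A Aᵀ` into `A²`.
-/

open Finset Matrix

theorem HasFDerivAt.pi_inv_of_eq_const {n E : Type*} [NormedAddCommGroup E] [NormedSpace ℝ E]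
    {f : E → n → ℝ} {f' : E →L[ℝ] n → ℝ} {x : E} {b : ℝ}
    (hf : HasFDerivAt f f' x) (hfx : f x = Function.const n b) (hb : b ≠ 0) :
    HasFDerivAt (fun y => (f y)⁻¹) (-(b ^ 2)⁻¹ • f') x := by
  rw [hasFDerivAt_pi'] at hf ⊢
  intro i
  have hi := (hasDerivAt_inv (hfx ▸ hb : f x i ≠ 0)).comp_hasFDerivAt x (hf i)
  rw [hfx, Function.const_apply, ← ContinuousLinearMap.comp_smul] at hi
  exact hi

variable {n : Type*} [Fintype n]

theorem mulVec_const_of_sum_eq {A : Matrix n n ℝ} {k : ℝ} (h : ∀ i, ∑ j, A i j = k) (a : ℝ) :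
    A *ᵥ Function.const n a = Function.const n (k * a) := by
  ext i
  simp [mulVec, dotProduct, ← sum_mul, h]

noncomputable def expWeight (c : ℝ) (p : n → ℝ) : n → ℝ := fun i => Real.exp (c * p i)

theorem hasFDerivAt_expWeight_const (c a : ℝ) :
    HasFDerivAt (expWeight c)
      ((c * Real.exp (c * a)) • ContinuousLinearMap.id ℝ (n → ℝ)) (Function.const n a) := by
  rw [hasFDerivAt_pi']
  intro i
  have hi := ((hasFDerivAt_apply i (Function.const n a)).const_mul c).exp
  simpa [expWeight, ContinuousLinearMap.comp_smul, smul_smul, mul_comm] using hi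

noncomputable def biasedWalk (A : Matrix n n ℝ) (c : ℝ) (p : n → ℝ) : n → ℝ :=
  expWeight c p * (A *ᵥ (p * (Aᵀ *ᵥ expWeight c p)⁻¹))

theorem biasedWalk_apply (A : Matrix n n ℝ) (c : ℝ) (p : n → ℝ) (i : n) :
    biasedWalk A c p i =
      ∑ j, (A i j * Real.exp (c * p i) / ∑ l, A l j * Real.exp (c * p l)) * p j := by
  simp only [biasedWalk, expWeight, Pi.mul_apply, Pi.inv_apply, mulVec, dotProduct,
    transpose_apply, mul_sum]
  refine sum_congr rfl fun j _ => ?_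
  ring

theorem hasFDerivAt_biasedWalk_const [DecidableEq n] {A : Matrix n n ℝ} {k : ℝ} (hk : k ≠ 0)
    (hrow : ∀ i, ∑ j, A i j = k) (hcol : ∀ j, ∑ i, A i j = k) (c a : ℝ) :
    HasFDerivAt (biasedWalk A c)
      (k⁻¹ • A - (c * a / k ^ 2) • (A * Aᵀ) + (c * a) • 1).mulVecLin.toContinuousLinearMap
      (Function.const n a) := by
  let toCLM (B : Matrix n n ℝ) : (n → ℝ) →L[ℝ] n → ℝ := B.mulVecLin.toContinuousLinearMap
  have hcolT : ∀ i, ∑ j, Aᵀ i j = k := hcol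
  have he := Real.exp_pos (c * a)
  have hE := hasFDerivAt_expWeight_const (n := n) c a
  have hEval : expWeight c (Function.const n a) = Function.const n (Real.exp (c * a)) := rfl
  have hDen : Aᵀ *ᵥ expWeight c (Function.const n a) = Function.const n (k * Real.exp (c * a)) := by
    rw [hEval, mulVec_const_of_sum_eq hcolT]
  have hDenInv := ((toCLM Aᵀ).hasFDerivAt.comp _ hE).pi_inv_of_eq_const hDen (by positivity)
  have hQuot := (hasFDerivAt_id (Function.const n a)).mul hDenInv
  refine (hE.mul ((toCLM A).hasFDerivAt.comp _ hQuot)).congr_fderiv ?_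
  ext1 v
  have hconst (b : ℝ) (w : n → ℝ) : Function.const n b * w = b • w := rfl
  simp only [_root_.add_apply, _root_.smul_apply, ContinuousLinearMap.comp_apply,
    ContinuousLinearMap.id_apply, Function.comp_apply, id, toCLM,
    LinearMap.coe_toContinuousLinearMap', mulVecLin_apply, hEval, Function.const_inv, smul_eq_mul,
    Pi.mul_apply, hconst, smul_mul_assoc, mulVec_smul, mulVec_add, mulVec_mulVec,
    mulVec_const_of_sum_eq hrow, mulVec_const_of_sum_eq hcolT, add_mulVec, sub_mulVec, smul_mulVec,
    one_mulVec]
  match_scalars <;> field_simp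

theorem jacobian_at_uniform_state_general
    (N : ℕ) (hN : 0 < N) (A : Matrix (Fin N) (Fin N) ℝ)
    (hsym : Aᵀ = A)
    (k : ℝ) (hk : 0 < k) (hreg : ∀ j, ∑ i, A i j = k)
    (α : ℝ)
    (F : (Fin N → ℝ) → (Fin N → ℝ))
    (hF : ∀ p i, F p i =
      ∑ j, (A i j * Real.exp (α * N * p i) /
        ∑ l, A l j * Real.exp (α * N * p l)) * p j)
    (punif : Fin N → ℝ) (hp : ∀ i, punif i = 1 / N)
    (M : Matrix (Fin N) (Fin N) ℝ)
    (hM : M = k⁻¹ • A - (α / k ^ 2) • (A * A) + α • (1 : Matrix (Fin N) (Fin N) ℝ)) :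
    HasFDerivAt F (LinearMap.toContinuousLinearMap M.mulVecLin) punif := by
  have hFwalk : F = biasedWalk A (α * N) :=
    funext₂ fun p i => (hF p i).trans (biasedWalk_apply ..).symm
  have hpunif : punif = Function.const (Fin N) (1 / N : ℝ) := funext hp
  have hrow (i) : ∑ j, A i j = k := show ∑ j, Aᵀ j i = k by rw [hsym]; exact hreg i
  have hαN : α * N * (1 / N : ℝ) = α := by field_simp [hN.ne']
  subst hFwalk hpunif hM
  have hDF := hasFDerivAt_biasedWalk_const hk.ne' hrow hreg (α * N) (1 / N)
  rwa [hsym, hαN] at hDF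

/-- For a nonlinear random walk with exponential bias
`f(p) = exp(αNp)` on an undirected (symmetric), unweighted, `k`-regular network,
the map `F` is differentiable at the uniform state `p_unif = (1/N, …, 1/N)` and
its Jacobian there is the matrix `A/k − α A²/k² + α I`. -/
theorem jacobian_at_uniform_state
    (N : ℕ) (hN : 0 < N) (A : Matrix (Fin N) (Fin N) ℝ)
    (hsym : Aᵀ = A) (hA01 : ∀ i j, A i j = 0 ∨ A i j = 1)
    (k : ℝ) (hk : 0 < k) (hreg : ∀ j, ∑ i, A i j = k)
    (α : ℝ)
    (F : (Fin N → ℝ) → (Fin N → ℝ))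
    (hF : ∀ p i, F p i =
      ∑ j, (A i j * Real.exp (α * N * p i) /
        ∑ l, A l j * Real.exp (α * N * p l)) * p j)
    (punif : Fin N → ℝ) (hp : ∀ i, punif i = 1 / N)
    (M : Matrix (Fin N) (Fin N) ℝ)
    (hM : M = k⁻¹ • A - (α / k ^ 2) • (A * A) + α • (1 : Matrix (Fin N) (Fin N) ℝ)) :
    HasFDerivAt F (LinearMap.toContinuousLinearMap M.mulVecLin) punif :=
  jacobian_at_uniform_state_general N hN A hsym k hk hreg α F hF punif hp M hM
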